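/- Let λ₁, λ₂, c, d > 0 and define C(y) = ∫₀^1 (1−z)^{λ₁−1} z^{λ₂−1} [1 + y(1−z)/d]^{−(λ₁+c)} [1 + yz/d]^{−(λ₂+c)} dz for y > 0. Then C(y) tends to ∫₀^1 (1−z)^{λ₁−1} z^{λ₂−1} dz = Γ(λ₁)Γ(λ₂)/Γ(λ₁+λ₂) as y → 0⁺. Consequently the density of the sum of two independent GG(λ₁, c, d) and GG(λ₂, c, d) random variables behaves like a constant multiple of y^{λ₁+λ₂−1} near 0, so the sparsity shape parameter of the sum is λ₁ + λ₂ (Theorem 2(ii)). -/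

import Mathlib

/-!
Substituting `w = y z` in the convolution integral pulls out `y ^ (λ₁ + λ₂ - 1)` and leaves the
normalising constants times `C(y)`. The two perturbation factors of `C(y)` lie in `(0, 1]` and
tend to `1` as `y → 0⁺`, so dominated convergence with the integrable beta kernel as bound gives
`C(y) → B(λ₁, λ₂)`, and the beta integral is evaluated through `Complex.betaIntegral`.
-/

open MeasureTheory Real Filter Set

/-- The gamma-gamma `GG(l, c, d)` density. -/
noncomputable def ggPDF (l c d Ψ : ℝ) : ℝ :=
  (1 / d) ^ l * (Real.Gamma (l + c) / (Real.Gamma l * Real.Gamma c)) *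
    Ψ ^ (l - 1) * (1 + Ψ / d) ^ (-(l + c))

open Topology

lemma ofReal_rpow_mul_one_sub_rpow (a b : ℝ) {x : ℝ} (hx : x ∈ Icc 0 1) :
    ((x ^ (a - 1) * (1 - x) ^ (b - 1) : ℝ) : ℂ) =
      (x : ℂ) ^ ((a : ℂ) - 1) * (1 - (x : ℂ)) ^ ((b : ℂ) - 1) := by
  rw [Complex.ofReal_mul, Complex.ofReal_cpow hx.1, Complex.ofReal_cpow (by linarith [hx.2])]
  push_cast
  rfl

lemma intervalIntegrable_rpow_mul_one_sub_rpow {a b : ℝ} (ha : 0 < a) (hb : 0 < b) :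
    IntervalIntegrable (fun x : ℝ => x ^ (a - 1) * (1 - x) ^ (b - 1)) volume 0 1 := by
  refine (Complex.betaIntegral_convergent (u := a) (v := b) (by simpa) (by simpa)).norm.congr
    fun x hx => ?_
  have hx' : x ∈ Icc (0 : ℝ) 1 := by
    rw [← uIcc_of_le zero_le_one]; exact uIoc_subset_uIcc hx
  rw [← ofReal_rpow_mul_one_sub_rpow a b hx', Complex.norm_real,
    Real.norm_of_nonneg (mul_nonneg (rpow_nonneg hx'.1 _) (rpow_nonneg (by linarith [hx'.2]) _))]

lemma integral_rpow_mul_one_sub_rpow {a b : ℝ} (ha : 0 < a) (hb : 0 < b) :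
    ∫ x in (0 : ℝ)..1, x ^ (a - 1) * (1 - x) ^ (b - 1) = ProbabilityTheory.beta a b := by
  rw [ProbabilityTheory.beta_eq_betaIntegralReal a b ha hb, Complex.betaIntegral,
    ← intervalIntegral.integral_congr fun x hx =>
      ofReal_rpow_mul_one_sub_rpow a b (by rwa [uIcc_of_le zero_le_one] at hx),
    intervalIntegral.integral_ofReal, Complex.ofReal_re]

lemma integral_one_sub_rpow_mul_rpow {a b : ℝ} (ha : 0 < a) (hb : 0 < b) :
    ∫ x in (0 : ℝ)..1, (1 - x) ^ (a - 1) * x ^ (b - 1) = ProbabilityTheory.beta a b := by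
  have h := intervalIntegral.integral_comp_sub_left
    (fun x : ℝ => x ^ (a - 1) * (1 - x) ^ (b - 1)) (a := 0) (b := 1) 1
  simp only [sub_sub_cancel, sub_zero, sub_self] at h
  rw [h, integral_rpow_mul_one_sub_rpow ha hb]

noncomputable def ggConst (l c d : ℝ) : ℝ :=
  (1 / d) ^ l * (Real.Gamma (l + c) / (Real.Gamma l * Real.Gamma c))

lemma ggPDF_eq (l c d Ψ : ℝ) :
    ggPDF l c d Ψ = ggConst l c d * Ψ ^ (l - 1) * (1 + Ψ / d) ^ (-(l + c)) := rfl

lemma ggConst_pos {l c d : ℝ} (hl : 0 < l) (hc : 0 < c) (hd : 0 < d) : 0 < ggConst l c d := by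
  have := Real.Gamma_pos_of_pos hl
  have := Real.Gamma_pos_of_pos hc
  have := Real.Gamma_pos_of_pos (add_pos hl hc)
  unfold ggConst
  positivity

/-- `C(y)` in the paper. -/
noncomputable def ggConvFactor (l1 l2 c d y : ℝ) : ℝ :=
  ∫ z in (0:ℝ)..1, (1 - z) ^ (l1 - 1) * z ^ (l2 - 1) *
    (1 + y * (1 - z) / d) ^ (-(l1 + c)) * (1 + y * z / d) ^ (-(l2 + c))

lemma integral_ggPDF_sub_mul_ggPDF (l1 l2 c d : ℝ) {y : ℝ} (hy : 0 < y) :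
    ∫ w in (0:ℝ)..y, ggPDF l1 c d (y - w) * ggPDF l2 c d w =
      ggConst l1 c d * ggConst l2 c d * y ^ (l1 + l2 - 1) * ggConvFactor l1 l2 c d y := by
  have hpow : y * (y ^ (l1 - 1) * y ^ (l2 - 1)) = y ^ (l1 + l2 - 1) := by
    rw [← rpow_add hy, mul_comm, ← rpow_add_one hy.ne']
    ring_nf
  have hsubst := intervalIntegral.smul_integral_comp_mul_left (a := 0) (b := 1)
    (fun w => ggPDF l1 c d (y - w) * ggPDF l2 c d w) y
  rw [mul_zero, mul_one] at hsubst
  rw [← hsubst, smul_eq_mul, ggConvFactor, ← intervalIntegral.integral_const_mul,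
    ← intervalIntegral.integral_const_mul]
  refine intervalIntegral.integral_congr fun z hz => ?_
  rw [uIcc_of_le zero_le_one] at hz
  simp only [ggPDF_eq]
  rw [show y - y * z = y * (1 - z) by ring, mul_rpow hy.le (by linarith [hz.2]),
    mul_rpow hy.le hz.1, ← hpow]
  ring_nf

lemma tendsto_ggConvFactor {l1 l2 c d : ℝ} (hl1 : 0 < l1) (hl2 : 0 < l2) (hc : 0 < c)
    (hd : 0 < d) :
    Tendsto (ggConvFactor l1 l2 c d) (𝓝[>] 0)
      (𝓝 (∫ z in (0:ℝ)..1, (1 - z) ^ (l1 - 1) * z ^ (l2 - 1))) := by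
  refine intervalIntegral.tendsto_integral_filter_of_dominated_convergence _
    (Eventually.of_forall fun y => (by fun_prop : Measurable _).aestronglyMeasurable) ?_
    ((intervalIntegrable_rpow_mul_one_sub_rpow hl2 hl1).congr fun z _ => mul_comm _ _) ?_
  · filter_upwards [self_mem_nhdsWithin] with y (hy : 0 < y)
    refine Eventually.of_forall fun z hz => ?_
    rw [uIoc_of_le zero_le_one] at hz
    have h1z : 0 ≤ 1 - z := by linarith [hz.2]
    have hz0 : 0 ≤ z := hz.1.le
    have hfac₁ : (1 + y * (1 - z) / d) ^ (-(l1 + c)) ≤ 1 :=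
      rpow_le_one_of_one_le_of_nonpos (le_add_of_nonneg_right (by positivity)) (by linarith)
    have hfac₂ : (1 + y * z / d) ^ (-(l2 + c)) ≤ 1 :=
      rpow_le_one_of_one_le_of_nonpos (le_add_of_nonneg_right (by positivity)) (by linarith)
    rw [Real.norm_of_nonneg (by positivity)]
    calc _ ≤ (1 - z) ^ (l1 - 1) * z ^ (l2 - 1) * 1 * 1 := by gcongr
      _ = _ := by ring
  · refine Eventually.of_forall fun z _ => ?_
    have h : ContinuousAt (fun y => (1 - z) ^ (l1 - 1) * z ^ (l2 - 1) *
        (1 + y * (1 - z) / d) ^ (-(l1 + c)) * (1 + y * z / d) ^ (-(l2 + c))) 0 :=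
      (continuousAt_const.mul (ContinuousAt.rpow_const (by fun_prop) (Or.inl (by simp)))).mul
        (ContinuousAt.rpow_const (by fun_prop) (Or.inl (by simp)))
    simpa using h.tendsto.mono_left nhdsWithin_le_nhds

/-- Theorem 2(ii) (Griffin & Brown): `C(y) → ∫₀¹ (1-z)^{λ₁-1} z^{λ₂-1} dz
= Γ(λ₁)Γ(λ₂)/Γ(λ₁+λ₂)` as `y → 0⁺`, and consequently the density of the sum of two
independent `GG(λ₁, c, d)` and `GG(λ₂, c, d)` random variables behaves like a positive
constant multiple of `y^{λ₁+λ₂-1}` near `0`. -/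
theorem stmt6 (l1 l2 c d : ℝ) (hl1 : 0 < l1) (hl2 : 0 < l2) (hc : 0 < c) (hd : 0 < d) :
    Tendsto (fun y : ℝ =>
        ∫ z in (0:ℝ)..1,
          (1 - z) ^ (l1 - 1) * z ^ (l2 - 1) *
            (1 + y * (1 - z) / d) ^ (-(l1 + c)) * (1 + y * z / d) ^ (-(l2 + c)))
      (nhdsWithin 0 (Set.Ioi 0))
      (nhds (∫ z in (0:ℝ)..1, (1 - z) ^ (l1 - 1) * z ^ (l2 - 1))) ∧
    (∫ z in (0:ℝ)..1, (1 - z) ^ (l1 - 1) * z ^ (l2 - 1)) =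
      Real.Gamma l1 * Real.Gamma l2 / Real.Gamma (l1 + l2) ∧
    ∃ κ : ℝ, 0 < κ ∧
      Tendsto (fun y : ℝ =>
          (∫ w in (0:ℝ)..y, ggPDF l1 c d (y - w) * ggPDF l2 c d w) /
            y ^ (l1 + l2 - 1))
        (nhdsWithin 0 (Set.Ioi 0)) (nhds κ) := by
  have hbeta := integral_one_sub_rpow_mul_rpow hl1 hl2
  have hC := tendsto_ggConvFactor hl1 hl2 hc hd
  refine ⟨hC, hbeta, ggConst l1 c d * ggConst l2 c d * ProbabilityTheory.beta l1 l2,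
    mul_pos (mul_pos (ggConst_pos hl1 hc hd) (ggConst_pos hl2 hc hd))
      (ProbabilityTheory.beta_pos hl1 hl2), ?_⟩
  rw [hbeta] at hC
  refine (hC.const_mul (ggConst l1 c d * ggConst l2 c d)).congr' ?_
  filter_upwards [self_mem_nhdsWithin] with y (hy : 0 < y)
  rw [integral_ggPDF_sub_mul_ggPDF l1 l2 c d hy]
  field_simp
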